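/- The double dual elementary transformation recovers the original bundle: if E^W is the r-elementary transformation of E at (x, W), and W* ≅ Ker(ι_x)^⊥ ⊆ ((E^W)^*)_x is the annihilator of Ker(ι_x), then the r-elementary transformation of (E^W)^* at (x, W*) is isomorphic to E^*. -/

import Mathlib

open TensorProduct

/-!
Let `π` be a uniformizer of `R`. Since `π` maps to `0` in the residue field, `π M ⊆ N ⊆ M`.
A functional `ψ` on `M` is therefore determined by its values on `N`, as `π ψ(m) = ψ(π m)`.
Conversely, a functional `φ` on `N` with `φ(N ∩ π M) ⊆ (π)` extends to `M` by
`ψ(m) = φ(π m) / π`, the division being exact and `R`-linear because `π` is a non-zero-divisor.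
-/

variable {R M : Type*} [CommRing R] [AddCommGroup M] [Module R M]

theorem LinearMap.apply_mem_of_mem_smul_top {I : Ideal R} (ψ : Module.Dual R M) {m : M}
    (hm : m ∈ I • (⊤ : Submodule R M)) : ψ m ∈ I := by
  have : ψ m ∈ (I • ⊤ : Submodule R M).map ψ := Submodule.mem_map_of_mem hm
  rw [Submodule.map_smul''] at this
  simpa [Ideal.mul_top] using Submodule.smul_mono le_rfl le_top this

theorem LinearMap.exists_mul_eq_of_forall_mem_span_singleton {π : R} (hπ : IsLeftRegular π)
    (f : Module.Dual R M) (hf : ∀ m, f m ∈ Ideal.span {π}) :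
    ∃ g : Module.Dual R M, ∀ m, π * g m = f m := by
  have hrange : LinearMap.range (LinearMap.mulLeft R π) = Ideal.span {π} := by
    ext a; simp [Ideal.mem_span_singleton', mul_comm]
  let e := LinearEquiv.ofInjective (LinearMap.mulLeft R π) hπ
  refine ⟨e.symm.toLinearMap ∘ₗ f.codRestrict _ (fun m => hrange ▸ hf m), fun m => ?_⟩
  exact congrArg Subtype.val (e.apply_symm_apply ⟨f m, hrange ▸ hf m⟩)

namespace Submodule

variable {N : Submodule R M} {π : R}

theorem dualMap_subtype_injective_of_smul_mem (hπ : IsLeftRegular π) (hN : ∀ m : M, π • m ∈ N) :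
    Function.Injective N.subtype.dualMap := by
  intro ψ ψ' h
  ext m
  apply hπ
  simpa using congrArg (fun φ : Module.Dual R N => φ ⟨π • m, hN m⟩) h

theorem mem_range_dualMap_subtype_iff_of_smul_mem (hπ : IsLeftRegular π)
    (hN : ∀ m : M, π • m ∈ N) (φ : Module.Dual R N) :
    φ ∈ LinearMap.range N.subtype.dualMap ↔
      ∀ v : N, (v : M) ∈ (Ideal.span {π} • ⊤ : Submodule R M) → φ v ∈ Ideal.span {π} := by
  constructor
  · rintro ⟨ψ, rfl⟩ v hv
    exact ψ.apply_mem_of_mem_smul_top hv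
  · intro hφ
    let smulπ : M →ₗ[R] N := (LinearMap.lsmul R M π).codRestrict N hN
    have hdiv : ∀ m, (φ ∘ₗ smulπ) m ∈ Ideal.span {π} := fun m =>
      hφ (smulπ m) (by rw [ideal_span_singleton_smul]; exact smul_mem_pointwise_smul m π ⊤ trivial)
    obtain ⟨ψ, hψ⟩ := (φ ∘ₗ smulπ).exists_mul_eq_of_forall_mem_span_singleton hπ hdiv
    refine ⟨ψ, LinearMap.ext fun v => hπ ?_⟩
    have hv : smulπ v = π • v := rfl
    simpa [hv] using hψ v

end Submodule

theorem double_dual_elementary_transformation_general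
    (R : Type) [CommRing R] [IsDomain R] [IsDiscreteValuationRing R]
    (M : Type) [AddCommGroup M] [Module R M]
    -- the residue field κ(x)
    (K : Type) [Field K] [Algebra R K]
    (hker : RingHom.ker (algebraMap R K) = IsLocalRing.maximalIdeal R)
    -- W ⊆ E_x = K ⊗[R] M, a subspace of dimension n - r
    (W : Submodule K (K ⊗[R] M))
    -- N = E^W = ker (E → O_x ⊗ (E_x/W))
    (N : Submodule R M)
    (hN : N = Submodule.comap (TensorProduct.mk R K M 1) (W.restrictScalars R)) :
    -- E^* embeds in (E^W)^* by restriction, and its image is exactly the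
    -- r-elementary transformation of (E^W)^* at (x, W* = Ker(ι_x)^⊥):
    Function.Injective ⇑(N.subtype.dualMap) ∧
    ∀ φ : Module.Dual R N,
      (φ ∈ LinearMap.range N.subtype.dualMap ↔
        ∀ v : N, (v : M) ∈ (IsLocalRing.maximalIdeal R • ⊤ : Submodule R M) →
          φ v ∈ IsLocalRing.maximalIdeal R) := by
  obtain ⟨π, hπ⟩ := IsDiscreteValuationRing.exists_irreducible R
  have hregular : IsLeftRegular π := IsLeftCancelMulZero.mul_left_cancel_of_ne_zero hπ.ne_zero
  have hπK : algebraMap R K π = 0 := by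
    rw [← RingHom.mem_ker, hker, hπ.maximalIdeal_eq]
    exact Ideal.mem_span_singleton_self π
  have hsmul_mem : ∀ m : M, π • m ∈ N := fun m => by
    simp [hN, TensorProduct.smul_tmul', Algebra.smul_def, hπK]
  rw [hπ.maximalIdeal_eq]
  exact ⟨N.dualMap_subtype_injective_of_smul_mem hregular hsmul_mem,
    N.mem_range_dualMap_subtype_iff_of_smul_mem hregular hsmul_mem⟩

theorem double_dual_elementary_transformation
    (R : Type) [CommRing R] [IsDomain R] [IsDiscreteValuationRing R]
    (M : Type) [AddCommGroup M] [Module R M] [Module.Free R M] [Module.Finite R M]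
    (n r : ℕ) (h0r : 0 < r) (hrn : r < n)
    (hrank : Module.finrank R M = n)
    -- the residue field κ(x)
    (K : Type) [Field K] [Algebra R K] (hK : Function.Surjective (algebraMap R K))
    (hker : RingHom.ker (algebraMap R K) = IsLocalRing.maximalIdeal R)
    -- W ⊆ E_x = K ⊗[R] M, a subspace of dimension n - r
    (W : Submodule K (K ⊗[R] M))
    (hW : Module.finrank K W = n - r)
    -- N = E^W = ker (E → O_x ⊗ (E_x/W))
    (N : Submodule R M)
    (hN : N = Submodule.comap (TensorProduct.mk R K M 1) (W.restrictScalars R)) :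
    -- E^* embeds in (E^W)^* by restriction, and its image is exactly the
    -- r-elementary transformation of (E^W)^* at (x, W* = Ker(ι_x)^⊥):
    Function.Injective ⇑(N.subtype.dualMap) ∧
    ∀ φ : Module.Dual R N,
      (φ ∈ LinearMap.range N.subtype.dualMap ↔
        ∀ v : N, (v : M) ∈ (IsLocalRing.maximalIdeal R • ⊤ : Submodule R M) →
          φ v ∈ IsLocalRing.maximalIdeal R) :=
  double_dual_elementary_transformation_general R M K hker W N hN
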